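/- Any two foldings on a double category D are isomorphic: if (Λ₁, j ↦ j̄) and (Λ₂, j ↦ j̿) are foldings on D with associated connection pairs (Γ₁,Γ₁') and (Γ₂,Γ₂'), then θj := Λ₂(Γ₁(j)) defines a morphism of foldings θ : Λ₁ → Λ₂ which is invertible, with inverse θ⁻¹j := Λ₂(Γ₁'(j)). -/
import Mathlib


open CategoryTheory

universe w v u

/-- A (strict) double category whose vertical 1-category is the category `I`:
objects are those of `I`, vertical morphisms are the morphisms of `I`, and the
horizontal morphisms and squares carry the remaining structure. -/
structure DoubleCat (I : Type u) [Category.{w} I] where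
  Hor : I → I → Type v
  hId : (A : I) → Hor A A
  hComp : {A B C : I} → Hor A B → Hor B C → Hor A C
  hId_comp : ∀ {A B : I} (f : Hor A B), hComp (hId A) f = f
  hComp_hId : ∀ {A B : I} (f : Hor A B), hComp f (hId B) = f
  hComp_assoc : ∀ {A B C D : I} (f : Hor A B) (g : Hor B C) (h : Hor C D),
    hComp (hComp f g) h = hComp f (hComp g h)
  Sq : {A B C D : I} → Hor A B → Hor C D → (A ⟶ C) → (B ⟶ D) → Type v
  hSqComp : ∀ {A B C A' B' C' : I} {f₁ : Hor A B} {f₂ : Hor B C}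
    {g₁ : Hor A' B'} {g₂ : Hor B' C'} {j : A ⟶ A'} {k : B ⟶ B'} {l : C ⟶ C'},
    Sq f₁ g₁ j k → Sq f₂ g₂ k l → Sq (hComp f₁ f₂) (hComp g₁ g₂) j l
  vSqComp : ∀ {A B A' B' A'' B'' : I} {f : Hor A B} {g : Hor A' B'} {h : Hor A'' B''}
    {j₁ : A ⟶ A'} {k₁ : B ⟶ B'} {j₂ : A' ⟶ A''} {k₂ : B' ⟶ B''},
    Sq f g j₁ k₁ → Sq g h j₂ k₂ → Sq f h (j₁ ≫ j₂) (k₁ ≫ k₂)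
  hSqId : ∀ {A C : I} (j : A ⟶ C), Sq (hId A) (hId C) j j
  vSqId : ∀ {A B : I} (f : Hor A B), Sq f f (𝟙 A) (𝟙 B)
  hSqId_vcomp : ∀ {A C E : I} (j₁ : A ⟶ C) (j₂ : C ⟶ E),
    vSqComp (hSqId j₁) (hSqId j₂) = hSqId (j₁ ≫ j₂)
  vSqId_hcomp : ∀ {A B C : I} (f₁ : Hor A B) (f₂ : Hor B C),
    hSqComp (vSqId f₁) (vSqId f₂) = vSqId (hComp f₁ f₂)
  hSq_id_left : ∀ {A B A' B' : I} {f : Hor A B} {g : Hor A' B'} {j : A ⟶ A'} {k : B ⟶ B'}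
    (α : Sq f g j k), HEq (hSqComp (hSqId j) α) α
  hSq_id_right : ∀ {A B A' B' : I} {f : Hor A B} {g : Hor A' B'} {j : A ⟶ A'} {k : B ⟶ B'}
    (α : Sq f g j k), HEq (hSqComp α (hSqId k)) α
  hSq_assoc : ∀ {A B C D A' B' C' D' : I}
    {f₁ : Hor A B} {f₂ : Hor B C} {f₃ : Hor C D}
    {g₁ : Hor A' B'} {g₂ : Hor B' C'} {g₃ : Hor C' D'}
    {j : A ⟶ A'} {k : B ⟶ B'} {l : C ⟶ C'} {m : D ⟶ D'}
    (α : Sq f₁ g₁ j k) (β : Sq f₂ g₂ k l) (γ : Sq f₃ g₃ l m),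
    HEq (hSqComp (hSqComp α β) γ) (hSqComp α (hSqComp β γ))
  vSq_id_left : ∀ {A B A' B' : I} {f : Hor A B} {g : Hor A' B'} {j : A ⟶ A'} {k : B ⟶ B'}
    (α : Sq f g j k), HEq (vSqComp (vSqId f) α) α
  vSq_id_right : ∀ {A B A' B' : I} {f : Hor A B} {g : Hor A' B'} {j : A ⟶ A'} {k : B ⟶ B'}
    (α : Sq f g j k), HEq (vSqComp α (vSqId g)) α
  vSq_assoc : ∀ {A₀ B₀ A₁ B₁ A₂ B₂ A₃ B₃ : I}
    {f₀ : Hor A₀ B₀} {f₁ : Hor A₁ B₁} {f₂ : Hor A₂ B₂} {f₃ : Hor A₃ B₃}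
    {j₁ : A₀ ⟶ A₁} {k₁ : B₀ ⟶ B₁} {j₂ : A₁ ⟶ A₂} {k₂ : B₁ ⟶ B₂} {j₃ : A₂ ⟶ A₃} {k₃ : B₂ ⟶ B₃}
    (α : Sq f₀ f₁ j₁ k₁) (β : Sq f₁ f₂ j₂ k₂) (γ : Sq f₂ f₃ j₃ k₃),
    HEq (vSqComp (vSqComp α β) γ) (vSqComp α (vSqComp β γ))
  interchange : ∀ {A B C A' B' C' A'' B'' C'' : I}
    {f₁ : Hor A B} {f₂ : Hor B C} {g₁ : Hor A' B'} {g₂ : Hor B' C'}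
    {h₁ : Hor A'' B''} {h₂ : Hor B'' C''}
    {j₁ : A ⟶ A'} {k₁ : B ⟶ B'} {l₁ : C ⟶ C'}
    {j₂ : A' ⟶ A''} {k₂ : B' ⟶ B''} {l₂ : C' ⟶ C''}
    (α : Sq f₁ g₁ j₁ k₁) (β : Sq f₂ g₂ k₁ l₁) (γ : Sq g₁ h₁ j₂ k₂) (δ : Sq g₂ h₂ k₂ l₂),
    hSqComp (vSqComp α γ) (vSqComp β δ) = vSqComp (hSqComp α β) (hSqComp γ δ)
  hSqId_one : ∀ A : I, hSqId (𝟙 A) = vSqId (hId A)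

namespace DoubleCat

variable {I : Type u} [Category.{w} I] (D : DoubleCat.{w, v} I)

/-- Transport a square along equalities of its four boundary components. -/
def castSq {A B C E : I} {f f' : D.Hor A B} {g g' : D.Hor C E} {j j' : A ⟶ C} {k k' : B ⟶ E}
    (hf : f = f') (hg : g = g') (hj : j = j') (hk : k = k') :
    D.Sq f g j k → D.Sq f' g' j' k' := by
  subst hf; subst hg; subst hj; subst hk; exact id

/-- A holonomy on a double category: a 2-functor from the vertical 1-category to the
horizontal 2-category which is the identity on objects. -/
structure Holonomy where
  bar : {A C : I} → (A ⟶ C) → D.Hor A C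
  bar_id : ∀ A : I, bar (𝟙 A) = D.hId A
  bar_comp : ∀ {A C E : I} (j : A ⟶ C) (k : C ⟶ E), bar (j ≫ k) = D.hComp (bar j) (bar k)

/-- A folding on a double category: a holonomy together with bijections from squares
with boundary (top `f`, bottom `g`, left `j`, right `k`) to squares with identity
vertical sides, top `k̄ ∘ f` and bottom `g ∘ j̄`, satisfying the four folding axioms. -/
structure Folding extends D.Holonomy where
  fold : ∀ {A B C E : I} {f : D.Hor A B} {g : D.Hor C E} {j : A ⟶ C} {k : B ⟶ E},
    D.Sq f g j k → D.Sq (D.hComp f (bar k)) (D.hComp (bar j) g) (𝟙 A) (𝟙 E)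
  fold_bijective : ∀ {A B C E : I} (f : D.Hor A B) (g : D.Hor C E) (j : A ⟶ C) (k : B ⟶ E),
    Function.Bijective (fold (f := f) (g := g) (j := j) (k := k))
  fold_globular : ∀ {A B : I} {f g : D.Hor A B} (α : D.Sq f g (𝟙 A) (𝟙 B)),
    HEq (fold α) α
  fold_hcomp : ∀ {A B C A' B' C' : I} {f₁ : D.Hor A B} {f₂ : D.Hor B C}
    {g₁ : D.Hor A' B'} {g₂ : D.Hor B' C'} {j : A ⟶ A'} {k : B ⟶ B'} {l : C ⟶ C'}
    (α : D.Sq f₁ g₁ j k) (β : D.Sq f₂ g₂ k l),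
    HEq (fold (D.hSqComp α β))
      (D.vSqComp (D.hSqComp (D.vSqId f₁) (fold β))
        (D.castSq (D.hComp_assoc f₁ (bar k) g₂) rfl rfl rfl
          (D.hSqComp (fold α) (D.vSqId g₂))))
  fold_vcomp : ∀ {A B A' B' A'' B'' : I} {f : D.Hor A B} {g : D.Hor A' B'} {h : D.Hor A'' B''}
    {j₁ : A ⟶ A'} {k₁ : B ⟶ B'} {j₂ : A' ⟶ A''} {k₂ : B' ⟶ B''}
    (α : D.Sq f g j₁ k₁) (β : D.Sq g h j₂ k₂),
    HEq (fold (D.vSqComp α β))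
      (D.vSqComp (D.hSqComp (fold α) (D.vSqId (bar k₂)))
        (D.castSq (D.hComp_assoc (bar j₁) g (bar k₂)).symm rfl rfl rfl
          (D.hSqComp (D.vSqId (bar j₁)) (fold β))))
  fold_hSqId : ∀ {A C : I} (j : A ⟶ C), HEq (fold (D.hSqId j)) (D.vSqId (bar j))

/-- A connection pair on a double category: a holonomy together with squares
`conn j` (`Γ(j)`) and `conn' j` (`Γ'(j)`) satisfying identity preservation, the
transport laws, and the cancellation laws. -/
structure ConnectionPair extends D.Holonomy where
  conn : ∀ {A C : I} (j : A ⟶ C), D.Sq (bar j) (D.hId C) j (𝟙 C)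
  conn' : ∀ {A C : I} (j : A ⟶ C), D.Sq (D.hId A) (bar j) (𝟙 A) j
  conn_id : ∀ A : I, HEq (conn (𝟙 A)) (D.vSqId (D.hId A))
  conn'_id : ∀ A : I, HEq (conn' (𝟙 A)) (D.vSqId (D.hId A))
  conn_comp : ∀ {A C E : I} (j₁ : A ⟶ C) (j₂ : C ⟶ E),
    HEq (conn (j₁ ≫ j₂))
      (D.vSqComp (D.hSqComp (conn j₁) (D.vSqId (bar j₂)))
        (D.hSqComp (D.hSqId j₂) (conn j₂)))
  conn'_comp : ∀ {A C E : I} (j₁ : A ⟶ C) (j₂ : C ⟶ E),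
    HEq (conn' (j₁ ≫ j₂))
      (D.vSqComp (D.hSqComp (conn' j₁) (D.hSqId j₁))
        (D.hSqComp (D.vSqId (bar j₁)) (conn' j₂)))
  conn'_conn_h : ∀ {A C : I} (j : A ⟶ C),
    HEq (D.hSqComp (conn' j) (conn j)) (D.vSqId (bar j))
  conn'_conn_v : ∀ {A C : I} (j : A ⟶ C),
    HEq (D.vSqComp (conn' j) (conn j)) (D.hSqId j)

end DoubleCat

namespace DoubleCat

variable {I : Type u} [Category.{w} I] (D : DoubleCat.{w, v} I)

/-- A morphism of foldings `θ : Λ₁ → Λ₂`: a horizontal natural transformation with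
identity components, i.e. for each vertical morphism `j` a square with identity
vertical sides, top `j̄` (the `Λ₁`-holonomy) and bottom `j̿` (the `Λ₂`-holonomy),
preserving identities and compositions and natural with respect to the foldings. -/
structure FoldingMorphism (Λ₁ Λ₂ : D.Folding) where
  sq : ∀ {A C : I} (j : A ⟶ C), D.Sq (Λ₁.bar j) (Λ₂.bar j) (𝟙 A) (𝟙 C)
  sq_id : ∀ A : I, HEq (sq (𝟙 A)) (D.vSqId (D.hId A))
  sq_comp : ∀ {A C E : I} (j₁ : A ⟶ C) (j₂ : C ⟶ E),
    HEq (sq (j₁ ≫ j₂)) (D.hSqComp (sq j₁) (sq j₂))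
  natural : ∀ {A B C E : I} {f : D.Hor A B} {g : D.Hor C E} {j : A ⟶ C} {k : B ⟶ E}
    (α : D.Sq f g j k),
    D.vSqComp (Λ₁.fold α) (D.hSqComp (sq j) (D.vSqId g)) =
      D.vSqComp (D.hSqComp (D.vSqId f) (sq k)) (Λ₂.fold α)

end DoubleCat


namespace DoubleCat

variable {I : Type u} [Category.{w} I] {D : DoubleCat.{w, v} I}

theorem castSq_heq {A B C E : I} {f f' : D.Hor A B} {g g' : D.Hor C E} {j j' : A ⟶ C}
    {k k' : B ⟶ E} (hf : f = f') (hg : g = g') (hj : j = j') (hk : k = k')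
    (α : D.Sq f g j k) : HEq (D.castSq hf hg hj hk α) α := by
  subst hf; subst hg; subst hj; subst hk; rfl

theorem hcomp_congr {A B C A' B' C' : I}
    {f₁ f₁' : D.Hor A B} {f₂ f₂' : D.Hor B C} {g₁ g₁' : D.Hor A' B'} {g₂ g₂' : D.Hor B' C'}
    {j j' : A ⟶ A'} {k k' : B ⟶ B'} {l l' : C ⟶ C'}
    {α : D.Sq f₁ g₁ j k} {α' : D.Sq f₁' g₁' j' k'}
    {β : D.Sq f₂ g₂ k l} {β' : D.Sq f₂' g₂' k' l'}
    (hf₁ : f₁ = f₁') (hf₂ : f₂ = f₂') (hg₁ : g₁ = g₁') (hg₂ : g₂ = g₂')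
    (hj : j = j') (hk : k = k') (hl : l = l') (hα : HEq α α') (hβ : HEq β β') :
    HEq (D.hSqComp α β) (D.hSqComp α' β') := by
  subst hf₁; subst hf₂; subst hg₁; subst hg₂; subst hj; subst hk; subst hl
  cases hα; cases hβ; rfl

theorem vcomp_congr {A B A' B' A'' B'' : I}
    {f f' : D.Hor A B} {g g' : D.Hor A' B'} {h h' : D.Hor A'' B''}
    {j₁ j₁' : A ⟶ A'} {k₁ k₁' : B ⟶ B'} {j₂ j₂' : A' ⟶ A''} {k₂ k₂' : B' ⟶ B''}
    {α : D.Sq f g j₁ k₁} {α' : D.Sq f' g' j₁' k₁'}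
    {β : D.Sq g h j₂ k₂} {β' : D.Sq g' h' j₂' k₂'}
    (hf : f = f') (hg : g = g') (hh : h = h')
    (hj₁ : j₁ = j₁') (hk₁ : k₁ = k₁') (hj₂ : j₂ = j₂') (hk₂ : k₂ = k₂')
    (hα : HEq α α') (hβ : HEq β β') :
    HEq (D.vSqComp α β) (D.vSqComp α' β') := by
  subst hf; subst hg; subst hh; subst hj₁; subst hk₁; subst hj₂; subst hk₂
  cases hα; cases hβ; rfl

theorem fold_congr (Λ : D.Folding) {A B C E : I} {f f' : D.Hor A B} {g g' : D.Hor C E}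
    {j j' : A ⟶ C} {k k' : B ⟶ E} {α : D.Sq f g j k} {α' : D.Sq f' g' j' k'}
    (hf : f = f') (hg : g = g') (hj : j = j') (hk : k = k') (hα : HEq α α') :
    HEq (Λ.fold α) (Λ.fold α') := by
  subst hf; subst hg; subst hj; subst hk; cases hα; rfl

theorem vSqId_congr {A B : I} {f f' : D.Hor A B} (hf : f = f') :
    HEq (D.vSqId f) (D.vSqId f') := by subst hf; rfl

/-- Horizontal composition with the vertical-identity square on `hId A` on the left. -/
theorem hSq_vId_left {A B B' : I} {f : D.Hor A B} {g : D.Hor A B'} {k : B ⟶ B'}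
    (α : D.Sq f g (𝟙 A) k) : HEq (D.hSqComp (D.vSqId (D.hId A)) α) α := by
  have h := D.hSq_id_left α; rwa [D.hSqId_one] at h

/-- Horizontal composition with the vertical-identity square on `hId B` on the right. -/
theorem hSq_vId_right {A B A' : I} {f : D.Hor A B} {g : D.Hor A' B} {j : A ⟶ A'}
    (α : D.Sq f g j (𝟙 B)) : HEq (D.hSqComp α (D.vSqId (D.hId B))) α := by
  have h := D.hSq_id_right α; rwa [D.hSqId_one] at h

end DoubleCat


namespace DoubleCat

variable {I : Type u} [Category.{w} I] {D : DoubleCat.{w, v} I}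

/-- Generic computation: folding the horizontal sandwich `Γ'(j) ∣ α ∣ Γ(k)` by an
arbitrary folding `Λ` yields the pasting of `Λ.fold α` with the folds of the
connection squares. -/
theorem fold_conn_sandwich (Λ₁ : D.Folding) (CP₁ : D.ConnectionPair)
    (hbar : ∀ {A C : I} (j : A ⟶ C), CP₁.bar j = Λ₁.bar j)
    (Λ : D.Folding)
    (X : ∀ {B E : I} (k : B ⟶ E), D.Sq (Λ₁.bar k) (Λ.bar k) (𝟙 B) (𝟙 E))
    (hX : ∀ {B E : I} (k : B ⟶ E), HEq (Λ.fold (CP₁.conn k)) (X k))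
    (X' : ∀ {A C : I} (j : A ⟶ C), D.Sq (Λ.bar j) (Λ₁.bar j) (𝟙 A) (𝟙 C))
    (hX' : ∀ {A C : I} (j : A ⟶ C), HEq (Λ.fold (CP₁.conn' j)) (X' j))
    {A B C E : I} {f : D.Hor A B} {g : D.Hor C E} {j : A ⟶ C} {k : B ⟶ E}
    (α : D.Sq f g j k) :
    HEq (Λ.fold (D.hSqComp (CP₁.conn' j) (D.hSqComp α (CP₁.conn k))))
      (D.vSqComp (D.vSqComp (D.hSqComp (D.vSqId f) (X k)) (Λ.fold α))
        (D.hSqComp (X' j) (D.vSqId g))) := by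
  have step1 : HEq (Λ.fold (D.hSqComp α (CP₁.conn k)))
      (D.vSqComp (D.hSqComp (D.vSqId f) (X k)) (Λ.fold α)) := by
    refine (Λ.fold_hcomp α (CP₁.conn k)).trans ?_
    refine vcomp_congr ?_ ?_ ?_ rfl rfl rfl rfl ?_ ?_
    · simp [Λ.bar_id, D.hComp_hId, hbar]
    · simp [D.hComp_hId]
    · simp [D.hComp_hId]
    · exact hcomp_congr rfl (by simp [Λ.bar_id, D.hComp_hId, hbar])
        rfl (by simp [D.hComp_hId]) rfl rfl rfl .rfl (hX k)
    · exact (castSq_heq _ _ _ _ _).trans (hSq_vId_right (Λ.fold α))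
  refine (Λ.fold_hcomp (CP₁.conn' j) (D.hSqComp α (CP₁.conn k))).trans ?_
  refine vcomp_congr ?_ ?_ ?_ ?_ ?_ rfl rfl ?_ ?_
  · simp [Λ.bar_id, D.hComp_hId, D.hId_comp, hbar]
  · simp [Λ.bar_id, D.hComp_hId, D.hId_comp, hbar]
  · simp [Λ.bar_id, D.hComp_hId, D.hId_comp, hbar]
  · simp
  · simp
  · exact (hSq_vId_left _).trans step1
  · refine (castSq_heq _ _ _ _ _).trans ?_
    exact hcomp_congr (by simp [Λ.bar_id, D.hId_comp, hbar])
      (by simp [D.hComp_hId]) (by simp [Λ.bar_id, D.hId_comp, hbar])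
      (by simp [D.hComp_hId]) rfl rfl rfl (hX' j) (vSqId_congr (D.hComp_hId g))

/-- For `Λ₁` itself, the sandwich `Γ'(j) ∣ α ∣ Γ(k)` is `Λ₁.fold α`. -/
theorem sandwich_eq_fold (Λ₁ : D.Folding) (CP₁ : D.ConnectionPair)
    (hbar : ∀ {A C : I} (j : A ⟶ C), CP₁.bar j = Λ₁.bar j)
    (hconn : ∀ {A C : I} (j : A ⟶ C), HEq (Λ₁.fold (CP₁.conn j)) (D.vSqId (Λ₁.bar j)))
    (hconn' : ∀ {A C : I} (j : A ⟶ C), HEq (Λ₁.fold (CP₁.conn' j)) (D.vSqId (Λ₁.bar j)))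
    {A B C E : I} {f : D.Hor A B} {g : D.Hor C E} {j : A ⟶ C} {k : B ⟶ E}
    (α : D.Sq f g j k) :
    HEq (D.hSqComp (CP₁.conn' j) (D.hSqComp α (CP₁.conn k))) (Λ₁.fold α) := by
  have h := fold_conn_sandwich Λ₁ CP₁ hbar Λ₁ (fun k => D.vSqId (Λ₁.bar k)) hconn
      (fun j => D.vSqId (Λ₁.bar j)) hconn' α
  rw [D.vSqId_hcomp, D.vSqId_hcomp] at h
  refine ((Λ₁.fold_globular _).symm.trans h).trans ?_
  exact (D.vSq_id_right _).trans (D.vSq_id_left _)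

/-- The component of the folding morphism `θ : Λ₁ → Λ₂`: `θ j := Λ₂.fold (Γ₁ j)`. -/
def thSq (Λ₁ Λ₂ : D.Folding) (CP₁ : D.ConnectionPair)
    (hbar : ∀ {A C : I} (j : A ⟶ C), CP₁.bar j = Λ₁.bar j)
    {A C : I} (j : A ⟶ C) : D.Sq (Λ₁.bar j) (Λ₂.bar j) (𝟙 A) (𝟙 C) :=
  D.castSq (by rw [Λ₂.bar_id, D.hComp_hId, hbar]) (D.hComp_hId _) rfl rfl
    (Λ₂.fold (CP₁.conn j))

/-- The component of the inverse folding morphism: `θ' j := Λ₂.fold (Γ₁' j)`. -/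
def thSq' (Λ₁ Λ₂ : D.Folding) (CP₁ : D.ConnectionPair)
    (hbar : ∀ {A C : I} (j : A ⟶ C), CP₁.bar j = Λ₁.bar j)
    {A C : I} (j : A ⟶ C) : D.Sq (Λ₂.bar j) (Λ₁.bar j) (𝟙 A) (𝟙 C) :=
  D.castSq (D.hId_comp _) (by rw [Λ₂.bar_id, D.hId_comp, hbar]) rfl rfl
    (Λ₂.fold (CP₁.conn' j))

theorem thSq_heq (Λ₁ Λ₂ : D.Folding) (CP₁ : D.ConnectionPair)
    (hbar : ∀ {A C : I} (j : A ⟶ C), CP₁.bar j = Λ₁.bar j)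
    {A C : I} (j : A ⟶ C) :
    HEq (thSq Λ₁ Λ₂ CP₁ hbar j) (Λ₂.fold (CP₁.conn j)) := castSq_heq _ _ _ _ _

theorem thSq'_heq (Λ₁ Λ₂ : D.Folding) (CP₁ : D.ConnectionPair)
    (hbar : ∀ {A C : I} (j : A ⟶ C), CP₁.bar j = Λ₁.bar j)
    {A C : I} (j : A ⟶ C) :
    HEq (thSq' Λ₁ Λ₂ CP₁ hbar j) (Λ₂.fold (CP₁.conn' j)) := castSq_heq _ _ _ _ _

/-- The expansion of `Λ₁.fold α` in terms of `Λ₂.fold α` and the `θ`-squares. -/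
theorem fold_expand (Λ₁ Λ₂ : D.Folding) (CP₁ : D.ConnectionPair)
    (hbar : ∀ {A C : I} (j : A ⟶ C), CP₁.bar j = Λ₁.bar j)
    (hconn : ∀ {A C : I} (j : A ⟶ C), HEq (Λ₁.fold (CP₁.conn j)) (D.vSqId (Λ₁.bar j)))
    (hconn' : ∀ {A C : I} (j : A ⟶ C), HEq (Λ₁.fold (CP₁.conn' j)) (D.vSqId (Λ₁.bar j)))
    {A B C E : I} {f : D.Hor A B} {g : D.Hor C E} {j : A ⟶ C} {k : B ⟶ E}
    (α : D.Sq f g j k) :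
    HEq (Λ₁.fold α)
      (D.vSqComp
        (D.vSqComp (D.hSqComp (D.vSqId f) (thSq Λ₁ Λ₂ CP₁ hbar k)) (Λ₂.fold α))
        (D.hSqComp (thSq' Λ₁ Λ₂ CP₁ hbar j) (D.vSqId g))) :=
  ((sandwich_eq_fold Λ₁ CP₁ hbar hconn hconn' α).symm.trans
    (Λ₂.fold_globular _).symm).trans
    (fold_conn_sandwich Λ₁ CP₁ hbar Λ₂
      (fun k => thSq Λ₁ Λ₂ CP₁ hbar k) (fun k => (thSq_heq Λ₁ Λ₂ CP₁ hbar k).symm)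
      (fun j => thSq' Λ₁ Λ₂ CP₁ hbar j) (fun j => (thSq'_heq Λ₁ Λ₂ CP₁ hbar j).symm) α)

theorem thSq_id (Λ₁ Λ₂ : D.Folding) (CP₁ : D.ConnectionPair)
    (hbar : ∀ {A C : I} (j : A ⟶ C), CP₁.bar j = Λ₁.bar j) (A : I) :
    HEq (thSq Λ₁ Λ₂ CP₁ hbar (𝟙 A)) (D.vSqId (D.hId A)) := by
  refine ((thSq_heq Λ₁ Λ₂ CP₁ hbar (𝟙 A)).trans ?_)
  refine (fold_congr Λ₂ (CP₁.bar_id A) rfl rfl rfl (CP₁.conn_id A)).trans ?_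
  exact Λ₂.fold_globular _

theorem thSq'_id (Λ₁ Λ₂ : D.Folding) (CP₁ : D.ConnectionPair)
    (hbar : ∀ {A C : I} (j : A ⟶ C), CP₁.bar j = Λ₁.bar j) (A : I) :
    HEq (thSq' Λ₁ Λ₂ CP₁ hbar (𝟙 A)) (D.vSqId (D.hId A)) := by
  refine ((thSq'_heq Λ₁ Λ₂ CP₁ hbar (𝟙 A)).trans ?_)
  refine (fold_congr Λ₂ rfl (CP₁.bar_id A) rfl rfl (CP₁.conn'_id A)).trans ?_
  exact Λ₂.fold_globular _

/-- `θ j` followed vertically by `θ' j` is the identity on `Λ₁.bar j`. -/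
theorem thSq_thSq' (Λ₁ Λ₂ : D.Folding) (CP₁ : D.ConnectionPair)
    (hbar : ∀ {A C : I} (j : A ⟶ C), CP₁.bar j = Λ₁.bar j)
    {A C : I} (j : A ⟶ C) :
    HEq (D.vSqComp (thSq Λ₁ Λ₂ CP₁ hbar j) (thSq' Λ₁ Λ₂ CP₁ hbar j))
      (D.vSqId (Λ₁.bar j)) := by
  have h := Λ₂.fold_hcomp (CP₁.conn' j) (CP₁.conn j)
  have h2 : HEq (D.vSqComp (thSq Λ₁ Λ₂ CP₁ hbar j) (thSq' Λ₁ Λ₂ CP₁ hbar j))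
      (Λ₂.fold (D.hSqComp (CP₁.conn' j) (CP₁.conn j))) := by
    refine HEq.trans ?_ h.symm
    refine vcomp_congr ?_ ?_ ?_ rfl rfl rfl rfl ?_ ?_
    · simp [Λ₂.bar_id, D.hComp_hId, D.hId_comp, hbar]
    · simp [Λ₂.bar_id, D.hComp_hId, D.hId_comp, hbar]
    · simp [Λ₂.bar_id, D.hComp_hId, D.hId_comp, hbar]
    · exact ((thSq_heq Λ₁ Λ₂ CP₁ hbar j).trans (hSq_vId_left _).symm)
    · refine ((thSq'_heq Λ₁ Λ₂ CP₁ hbar j).trans ?_).trans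
        (castSq_heq _ _ _ _ _).symm
      exact (hSq_vId_right _).symm
  refine h2.trans ?_
  refine (fold_congr Λ₂ (D.hId_comp _) (D.hComp_hId _) rfl rfl
    (CP₁.conn'_conn_h j)).trans ?_
  exact (Λ₂.fold_globular _).trans (vSqId_congr (hbar j))

/-- `θ' j` followed vertically by `θ j` is the identity on `Λ₂.bar j`. -/
theorem thSq'_thSq (Λ₁ Λ₂ : D.Folding) (CP₁ : D.ConnectionPair)
    (hbar : ∀ {A C : I} (j : A ⟶ C), CP₁.bar j = Λ₁.bar j)
    {A C : I} (j : A ⟶ C) :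
    HEq (D.vSqComp (thSq' Λ₁ Λ₂ CP₁ hbar j) (thSq Λ₁ Λ₂ CP₁ hbar j))
      (D.vSqId (Λ₂.bar j)) := by
  have h := Λ₂.fold_vcomp (CP₁.conn' j) (CP₁.conn j)
  have h2 : HEq (D.vSqComp (thSq' Λ₁ Λ₂ CP₁ hbar j) (thSq Λ₁ Λ₂ CP₁ hbar j))
      (Λ₂.fold (D.vSqComp (CP₁.conn' j) (CP₁.conn j))) := by
    refine HEq.trans ?_ h.symm
    refine vcomp_congr ?_ ?_ ?_ rfl rfl rfl rfl ?_ ?_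
    · simp [Λ₂.bar_id, D.hComp_hId, D.hId_comp, hbar]
    · simp [Λ₂.bar_id, D.hComp_hId, D.hId_comp, hbar]
    · simp [Λ₂.bar_id, D.hComp_hId, D.hId_comp, hbar]
    · refine (thSq'_heq Λ₁ Λ₂ CP₁ hbar j).trans ?_
      refine HEq.trans ?_ (hcomp_congr rfl (Λ₂.bar_id C).symm rfl
        (Λ₂.bar_id C).symm rfl rfl rfl .rfl (vSqId_congr (Λ₂.bar_id C).symm))
      exact (hSq_vId_right _).symm
    · refine HEq.trans ?_ (castSq_heq _ _ _ _ _).symm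
      refine (thSq_heq Λ₁ Λ₂ CP₁ hbar j).trans ?_
      refine HEq.trans ?_ (hcomp_congr (Λ₂.bar_id A).symm rfl
        (Λ₂.bar_id A).symm rfl rfl rfl rfl (vSqId_congr (Λ₂.bar_id A).symm) .rfl)
      exact (hSq_vId_left _).symm
  refine h2.trans ?_
  refine (fold_congr Λ₂ rfl rfl (by simp) (by simp) (CP₁.conn'_conn_v j)).trans ?_
  exact Λ₂.fold_hSqId j

theorem thSq_comp (Λ₁ Λ₂ : D.Folding) (CP₁ : D.ConnectionPair)
    (hbar : ∀ {A C : I} (j : A ⟶ C), CP₁.bar j = Λ₁.bar j)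
    {A C E : I} (j₁ : A ⟶ C) (j₂ : C ⟶ E) :
    HEq (thSq Λ₁ Λ₂ CP₁ hbar (j₁ ≫ j₂))
      (D.hSqComp (thSq Λ₁ Λ₂ CP₁ hbar j₁) (thSq Λ₁ Λ₂ CP₁ hbar j₂)) := by
  have hR1 : HEq (Λ₂.fold (D.hSqComp (CP₁.conn j₁) (D.vSqId (CP₁.bar j₂))))
      (D.hSqComp (thSq Λ₁ Λ₂ CP₁ hbar j₁) (D.vSqId (Λ₁.bar j₂))) := by
    refine (Λ₂.fold_hcomp (CP₁.conn j₁) (D.vSqId (CP₁.bar j₂))).trans ?_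
    refine HEq.trans (vcomp_congr
      (by simp [Λ₂.bar_id, D.hComp_hId, D.hId_comp, hbar])
      (by simp [Λ₂.bar_id, D.hComp_hId, D.hId_comp, hbar])
      (by simp [Λ₂.bar_id, D.hComp_hId, D.hId_comp, hbar]) rfl rfl rfl rfl
      ((hcomp_congr (hbar j₁)
          (by simp [Λ₂.bar_id, D.hComp_hId, hbar]) (hbar j₁)
          (by simp [Λ₂.bar_id, D.hId_comp, hbar]) rfl rfl rfl
          (vSqId_congr (hbar j₁))
          ((Λ₂.fold_globular _).trans (vSqId_congr (hbar j₂)))).trans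
        (heq_of_eq (D.vSqId_hcomp _ _)))
      ((castSq_heq _ _ _ _ _).trans
        (hcomp_congr (by simp [Λ₂.bar_id, D.hComp_hId, hbar])
          (hbar j₂) (by simp [D.hComp_hId]) (hbar j₂) rfl rfl rfl
          (thSq_heq Λ₁ Λ₂ CP₁ hbar j₁).symm (vSqId_congr (hbar j₂)))))
      (D.vSq_id_left _)
  have hR2 : HEq (Λ₂.fold (D.hSqComp (D.hSqId j₂) (CP₁.conn j₂)))
      (thSq Λ₁ Λ₂ CP₁ hbar j₂) := by
    refine (Λ₂.fold_hcomp (D.hSqId j₂) (CP₁.conn j₂)).trans ?_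
    refine HEq.trans (vcomp_congr
      (by simp [Λ₂.bar_id, D.hComp_hId, D.hId_comp, hbar])
      (by simp [Λ₂.bar_id, D.hComp_hId, D.hId_comp, hbar])
      (by simp [Λ₂.bar_id, D.hComp_hId, D.hId_comp, hbar]) rfl rfl rfl rfl
      ((hSq_vId_left _).trans (thSq_heq Λ₁ Λ₂ CP₁ hbar j₂).symm)
      ((castSq_heq _ _ _ _ _).trans
        ((hSq_vId_right _).trans (Λ₂.fold_hSqId j₂))))
      (D.vSq_id_right _)
  refine (thSq_heq Λ₁ Λ₂ CP₁ hbar (j₁ ≫ j₂)).trans ?_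
  refine (fold_congr Λ₂ (CP₁.bar_comp j₁ j₂) (D.hComp_hId _).symm rfl (by simp)
    (CP₁.conn_comp j₁ j₂)).trans ?_
  refine (Λ₂.fold_vcomp _ _).trans ?_
  refine HEq.trans (vcomp_congr
    (by simp [Λ₂.bar_id, D.hComp_hId, D.hId_comp, hbar])
    (by simp [Λ₂.bar_id, D.hComp_hId, D.hId_comp, hbar])
    (by simp [Λ₂.bar_id, D.hComp_hId, D.hId_comp, hbar]) rfl rfl rfl rfl
    ((hcomp_congr rfl (Λ₂.bar_id E) rfl (Λ₂.bar_id E) rfl rfl rfl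
        .rfl (vSqId_congr (Λ₂.bar_id E))).trans
      ((hSq_vId_right _).trans hR1))
    ((castSq_heq _ _ _ _ _).trans
      (hcomp_congr rfl (by simp [Λ₂.bar_id, D.hComp_hId, D.hId_comp, hbar])
        rfl (by simp [D.hComp_hId]) rfl rfl rfl
        .rfl hR2))) ?_
  refine HEq.trans (heq_of_eq (D.interchange (thSq Λ₁ Λ₂ CP₁ hbar j₁)
    (D.vSqId (Λ₁.bar j₂)) (D.vSqId (Λ₂.bar j₁)) (thSq Λ₁ Λ₂ CP₁ hbar j₂)).symm) ?_
  exact hcomp_congr rfl rfl rfl rfl (by simp) (by simp) (by simp)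
    (D.vSq_id_right _) (D.vSq_id_left _)

theorem thSq'_comp (Λ₁ Λ₂ : D.Folding) (CP₁ : D.ConnectionPair)
    (hbar : ∀ {A C : I} (j : A ⟶ C), CP₁.bar j = Λ₁.bar j)
    {A C E : I} (j₁ : A ⟶ C) (j₂ : C ⟶ E) :
    HEq (thSq' Λ₁ Λ₂ CP₁ hbar (j₁ ≫ j₂))
      (D.hSqComp (thSq' Λ₁ Λ₂ CP₁ hbar j₁) (thSq' Λ₁ Λ₂ CP₁ hbar j₂)) := by
  have hR1 : HEq (Λ₂.fold (D.hSqComp (CP₁.conn' j₁) (D.hSqId j₁)))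
      (thSq' Λ₁ Λ₂ CP₁ hbar j₁) := by
    refine (Λ₂.fold_hcomp (CP₁.conn' j₁) (D.hSqId j₁)).trans ?_
    refine HEq.trans (vcomp_congr
      (by simp [Λ₂.bar_id, D.hComp_hId, D.hId_comp, hbar])
      (by simp [Λ₂.bar_id, D.hComp_hId, D.hId_comp, hbar])
      (by simp [Λ₂.bar_id, D.hComp_hId, D.hId_comp, hbar]) rfl rfl rfl rfl
      ((hSq_vId_left _).trans (Λ₂.fold_hSqId j₁))
      ((castSq_heq _ _ _ _ _).trans
        ((hSq_vId_right _).trans (thSq'_heq Λ₁ Λ₂ CP₁ hbar j₁).symm)))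
      (D.vSq_id_left _)
  have hR2 : HEq (Λ₂.fold (D.hSqComp (D.vSqId (CP₁.bar j₁)) (CP₁.conn' j₂)))
      (D.hSqComp (D.vSqId (Λ₁.bar j₁)) (thSq' Λ₁ Λ₂ CP₁ hbar j₂)) := by
    refine (Λ₂.fold_hcomp (D.vSqId (CP₁.bar j₁)) (CP₁.conn' j₂)).trans ?_
    refine HEq.trans (vcomp_congr
      (by simp [Λ₂.bar_id, D.hComp_hId, D.hId_comp, hbar])
      (by simp [Λ₂.bar_id, D.hComp_hId, D.hId_comp, hbar])
      (by simp [Λ₂.bar_id, D.hComp_hId, D.hId_comp, hbar]) rfl rfl rfl rfl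
      (hcomp_congr (hbar j₁) (by simp [D.hId_comp]) (hbar j₁)
        (by simp [Λ₂.bar_id, D.hId_comp, hbar]) rfl rfl rfl
        (vSqId_congr (hbar j₁)) (thSq'_heq Λ₁ Λ₂ CP₁ hbar j₂).symm)
      ((castSq_heq _ _ _ _ _).trans
        ((hcomp_congr (by simp [Λ₂.bar_id, D.hComp_hId, hbar])
            (hbar j₂) (by simp [Λ₂.bar_id, D.hId_comp, hbar]) (hbar j₂)
            rfl rfl rfl
            ((Λ₂.fold_globular _).trans (vSqId_congr (hbar j₁)))
            (vSqId_congr (hbar j₂))).trans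
          (heq_of_eq (D.vSqId_hcomp _ _)))))
      (D.vSq_id_right _)
  refine (thSq'_heq Λ₁ Λ₂ CP₁ hbar (j₁ ≫ j₂)).trans ?_
  refine (fold_congr Λ₂ (D.hComp_hId _).symm (CP₁.bar_comp j₁ j₂) (by simp) rfl
    (CP₁.conn'_comp j₁ j₂)).trans ?_
  refine (Λ₂.fold_vcomp _ _).trans ?_
  refine HEq.trans (vcomp_congr
    (by simp [Λ₂.bar_id, D.hComp_hId, D.hId_comp, hbar])
    (by simp [Λ₂.bar_id, D.hComp_hId, D.hId_comp, hbar])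
    (by simp [Λ₂.bar_id, D.hComp_hId, D.hId_comp, hbar]) rfl rfl rfl rfl
    (hcomp_congr (by simp [Λ₂.bar_id, D.hComp_hId, D.hId_comp, hbar])
      rfl (by simp [Λ₂.bar_id, D.hComp_hId, D.hId_comp, hbar]) rfl rfl rfl rfl
      hR1 .rfl)
    ((castSq_heq _ _ _ _ _).trans
      ((hcomp_congr (Λ₂.bar_id A) (by simp [Λ₂.bar_id, D.hComp_hId, D.hId_comp, hbar])
          (Λ₂.bar_id A) (by simp [Λ₂.bar_id, D.hComp_hId, D.hId_comp, hbar])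
          rfl rfl rfl (vSqId_congr (Λ₂.bar_id A)) .rfl).trans
        ((hSq_vId_left _).trans hR2)))) ?_
  refine HEq.trans (heq_of_eq (D.interchange (thSq' Λ₁ Λ₂ CP₁ hbar j₁)
    (D.vSqId (Λ₂.bar j₂)) (D.vSqId (Λ₁.bar j₁)) (thSq' Λ₁ Λ₂ CP₁ hbar j₂)).symm) ?_
  exact hcomp_congr rfl rfl rfl rfl (by simp) (by simp) (by simp)
    (D.vSq_id_right _) (D.vSq_id_left _)

theorem thNat (Λ₁ Λ₂ : D.Folding) (CP₁ : D.ConnectionPair)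
    (hbar : ∀ {A C : I} (j : A ⟶ C), CP₁.bar j = Λ₁.bar j)
    (hconn : ∀ {A C : I} (j : A ⟶ C), HEq (Λ₁.fold (CP₁.conn j)) (D.vSqId (Λ₁.bar j)))
    (hconn' : ∀ {A C : I} (j : A ⟶ C), HEq (Λ₁.fold (CP₁.conn' j)) (D.vSqId (Λ₁.bar j)))
    {A B C E : I} {f : D.Hor A B} {g : D.Hor C E} {j : A ⟶ C} {k : B ⟶ E}
    (α : D.Sq f g j k) :
    D.vSqComp (Λ₁.fold α) (D.hSqComp (thSq Λ₁ Λ₂ CP₁ hbar j) (D.vSqId g)) =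
      D.vSqComp (D.hSqComp (D.vSqId f) (thSq Λ₁ Λ₂ CP₁ hbar k)) (Λ₂.fold α) := by
  refine eq_of_heq ?_
  refine HEq.trans (vcomp_congr rfl rfl rfl (by simp) (by simp) rfl rfl
    (fold_expand Λ₁ Λ₂ CP₁ hbar hconn hconn' α) .rfl) ?_
  refine (D.vSq_assoc _ _ _).trans ?_
  refine HEq.trans (vcomp_congr rfl rfl rfl (by simp) (by simp) (by simp) (by simp)
    .rfl ?inner) (D.vSq_id_right _)
  case inner =>
    refine HEq.trans (heq_of_eq (D.interchange (thSq' Λ₁ Λ₂ CP₁ hbar j)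
      (D.vSqId g) (thSq Λ₁ Λ₂ CP₁ hbar j) (D.vSqId g)).symm) ?_
    refine HEq.trans (hcomp_congr rfl rfl rfl rfl (by simp) (by simp) (by simp)
      (thSq'_thSq Λ₁ Λ₂ CP₁ hbar j) (D.vSq_id_left (D.vSqId g))) ?_
    exact heq_of_eq (D.vSqId_hcomp _ _)

theorem thNat' (Λ₁ Λ₂ : D.Folding) (CP₁ : D.ConnectionPair)
    (hbar : ∀ {A C : I} (j : A ⟶ C), CP₁.bar j = Λ₁.bar j)
    (hconn : ∀ {A C : I} (j : A ⟶ C), HEq (Λ₁.fold (CP₁.conn j)) (D.vSqId (Λ₁.bar j)))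
    (hconn' : ∀ {A C : I} (j : A ⟶ C), HEq (Λ₁.fold (CP₁.conn' j)) (D.vSqId (Λ₁.bar j)))
    {A B C E : I} {f : D.Hor A B} {g : D.Hor C E} {j : A ⟶ C} {k : B ⟶ E}
    (α : D.Sq f g j k) :
    D.vSqComp (Λ₂.fold α) (D.hSqComp (thSq' Λ₁ Λ₂ CP₁ hbar j) (D.vSqId g)) =
      D.vSqComp (D.hSqComp (D.vSqId f) (thSq' Λ₁ Λ₂ CP₁ hbar k)) (Λ₁.fold α) := by
  refine eq_of_heq (HEq.symm ?_)
  refine HEq.trans (vcomp_congr rfl rfl rfl (by simp) (by simp) (by simp) (by simp)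
    .rfl (fold_expand Λ₁ Λ₂ CP₁ hbar hconn hconn' α)) ?_
  refine HEq.trans (D.vSq_assoc _ _ _).symm ?_
  refine vcomp_congr rfl rfl rfl (by simp) (by simp) rfl rfl ?inner .rfl
  case inner =>
    refine HEq.trans (D.vSq_assoc _ _ _).symm ?_
    refine HEq.trans (vcomp_congr rfl rfl rfl (by simp) (by simp) rfl rfl ?pair .rfl)
      (D.vSq_id_left _)
    case pair =>
      refine HEq.trans (heq_of_eq (D.interchange (D.vSqId f) (thSq' Λ₁ Λ₂ CP₁ hbar k)
        (D.vSqId f) (thSq Λ₁ Λ₂ CP₁ hbar k)).symm) ?_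
      refine HEq.trans (hcomp_congr rfl rfl rfl rfl (by simp) (by simp) (by simp)
        (D.vSq_id_left (D.vSqId f)) (thSq'_thSq Λ₁ Λ₂ CP₁ hbar k)) ?_
      exact heq_of_eq (D.vSqId_hcomp _ _)

end DoubleCat

/-- Any two foldings `Λ₁`, `Λ₂` on a double category `D` are isomorphic:
with `(Γ₁,Γ₁')` the connection pair associated to `Λ₁`, the assignment
`θj := Λ₂(Γ₁(j))` is a morphism of foldings `Λ₁ → Λ₂`, invertible with inverse
`θ⁻¹j := Λ₂(Γ₁'(j))`. -/
theorem foldings_isomorphic {I : Type u} [Category.{w} I]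
    (D : DoubleCat.{w, v} I) (Λ₁ Λ₂ : D.Folding) (CP₁ : D.ConnectionPair)
    (hbar : ∀ {A C : I} (j : A ⟶ C), CP₁.bar j = Λ₁.bar j)
    (hconn : ∀ {A C : I} (j : A ⟶ C), HEq (Λ₁.fold (CP₁.conn j)) (D.vSqId (Λ₁.bar j)))
    (hconn' : ∀ {A C : I} (j : A ⟶ C), HEq (Λ₁.fold (CP₁.conn' j)) (D.vSqId (Λ₁.bar j))) :
    ∃ (θ : D.FoldingMorphism Λ₁ Λ₂) (θ' : D.FoldingMorphism Λ₂ Λ₁),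
      (∀ {A C : I} (j : A ⟶ C), HEq (θ.sq j) (Λ₂.fold (CP₁.conn j))) ∧
      (∀ {A C : I} (j : A ⟶ C), HEq (θ'.sq j) (Λ₂.fold (CP₁.conn' j))) ∧
      (∀ {A C : I} (j : A ⟶ C),
        HEq (D.vSqComp (θ.sq j) (θ'.sq j)) (D.vSqId (Λ₁.bar j))) ∧
      (∀ {A C : I} (j : A ⟶ C),
        HEq (D.vSqComp (θ'.sq j) (θ.sq j)) (D.vSqId (Λ₂.bar j))) := by
  refine ⟨⟨fun {A C} j => DoubleCat.thSq Λ₁ Λ₂ CP₁ hbar j,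
      fun A => DoubleCat.thSq_id Λ₁ Λ₂ CP₁ hbar A,
      fun j₁ j₂ => DoubleCat.thSq_comp Λ₁ Λ₂ CP₁ hbar j₁ j₂,
      fun α => DoubleCat.thNat Λ₁ Λ₂ CP₁ hbar hconn hconn' α⟩,
    ⟨fun {A C} j => DoubleCat.thSq' Λ₁ Λ₂ CP₁ hbar j,
      fun A => DoubleCat.thSq'_id Λ₁ Λ₂ CP₁ hbar A,
      fun j₁ j₂ => DoubleCat.thSq'_comp Λ₁ Λ₂ CP₁ hbar j₁ j₂,
      fun α => DoubleCat.thNat' Λ₁ Λ₂ CP₁ hbar hconn hconn' α⟩,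
    fun j => DoubleCat.thSq_heq Λ₁ Λ₂ CP₁ hbar j,
    fun j => DoubleCat.thSq'_heq Λ₁ Λ₂ CP₁ hbar j,
    fun j => DoubleCat.thSq_thSq' Λ₁ Λ₂ CP₁ hbar j,
    fun j => DoubleCat.thSq'_thSq Λ₁ Λ₂ CP₁ hbar j⟩
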